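/- Let γ > 0, c ∈ ℝ and α₀₁ ≠ 0, and write G(u) = G(u; γ, c). If real numbers λ₀, λ₁, λ₂, λ₃ satisfy λ₀·1 + λ₁·G(u) + λ₂·α₀₁·(u − c)·G(u)·(1 − G(u)) + λ₃·(−α₀₁·γ)·G(u)·(1 − G(u)) = 0 for every u ∈ ℝ, then λ₀ = λ₁ = λ₂ = λ₃ = 0. In other words, the four partial derivatives of the intercept α₀(u) = α₀ + α₀₁·G(u; γ, c) with respect to the parameters (α₀, α₀₁, γ, c) are linearly independent functions of u. -/

import Mathlib

/-!
Write `G γ c u = σ (γ (u - c))` with `σ` the sigmoid. The bumps `G (1 - G)` and `(u - c) G (1 - G)`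
vanish at `±∞` while `G` tends to `0` and `1`, so letting `u → -∞` and `u → +∞` gives `l0 = 0` and
`l0 + l1 = 0`. The remaining identity factors as `α₀₁ G (1 - G) (l2 (u - c) - l3 γ) = 0` with a
nonvanishing prefactor, so the affine function `l2 (u - c) - l3 γ` vanishes identically.
-/

/-- The logistic transition function `G(u; γ, c) = (1 + exp(−γ(u − c)))⁻¹`. -/
noncomputable def G (γ c u : ℝ) : ℝ := (1 + Real.exp (-γ * (u - c)))⁻¹

open Filter Topology Real

namespace Real

lemma sigmoid_mul_one_sub_sigmoid_pos (x : ℝ) : 0 < sigmoid x * (1 - sigmoid x) :=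
  mul_pos (sigmoid_pos x) (sub_pos.mpr (sigmoid_lt_one x))

lemma tendsto_sigmoid_mul_one_sub_sigmoid :
    Tendsto (fun x => sigmoid x * (1 - sigmoid x)) (atBot ⊔ atTop) (𝓝 0) := by
  refine Tendsto.sup ?_ ?_
  · simpa using tendsto_sigmoid_atBot.mul (tendsto_sigmoid_atBot.const_sub 1)
  · simpa using tendsto_sigmoid_atTop.mul (tendsto_sigmoid_atTop.const_sub 1)

lemma tendsto_mul_sigmoid_mul_one_sub_sigmoid :
    Tendsto (fun x => x * (sigmoid x * (1 - sigmoid x))) (atBot ⊔ atTop) (𝓝 0) := by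
  have hodd (x : ℝ) : -x * (sigmoid (-x) * (1 - sigmoid (-x))) =
      -(x * (sigmoid x * (1 - sigmoid x))) := by
    rw [sigmoid_neg]; ring
  -- `1 - σ x = σ x * exp (-x)`, so the product is `x * exp (-x) * σ x ^ 2`
  have hTop : Tendsto (fun x => x * (sigmoid x * (1 - sigmoid x))) atTop (𝓝 0) := by
    have hxexp : Tendsto (fun x : ℝ => x * exp (-x)) atTop (𝓝 0) := by
      simpa using tendsto_pow_mul_exp_neg_atTop_nhds_zero 1
    convert (hxexp.mul (tendsto_sigmoid_atTop.pow 2)) using 1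
    · ext x
      rw [← sigmoid_neg, ← sigmoid_mul_rexp_neg]
      ring
    · simp
  refine Tendsto.sup ?_ hTop
  simpa [hodd] using (hTop.comp tendsto_neg_atBot_atTop).neg

end Real

lemma G_eq_sigmoid (γ c u : ℝ) : G γ c u = sigmoid (γ * (u - c)) := by
  rw [G, sigmoid_def, neg_mul]

section

variable {γ : ℝ} (c : ℝ)

lemma G_mul_one_sub_G_pos (u : ℝ) : 0 < G γ c u * (1 - G γ c u) := by
  rw [G_eq_sigmoid]
  exact sigmoid_mul_one_sub_sigmoid_pos _

lemma tendsto_mul_sub_atBot (hγ : 0 < γ) : Tendsto (fun u => γ * (u - c)) atBot atBot :=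
  (tendsto_atBot_add_const_right _ _ tendsto_id).const_mul_atBot hγ

lemma tendsto_mul_sub_atTop (hγ : 0 < γ) : Tendsto (fun u => γ * (u - c)) atTop atTop :=
  (tendsto_atTop_add_const_right _ _ tendsto_id).const_mul_atTop hγ

lemma tendsto_G_atBot (hγ : 0 < γ) : Tendsto (G γ c) atBot (𝓝 0) := by
  simp_rw [funext (G_eq_sigmoid γ c)]
  exact tendsto_sigmoid_atBot.comp (tendsto_mul_sub_atBot c hγ)

lemma tendsto_G_atTop (hγ : 0 < γ) : Tendsto (G γ c) atTop (𝓝 1) := by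
  simp_rw [funext (G_eq_sigmoid γ c)]
  exact tendsto_sigmoid_atTop.comp (tendsto_mul_sub_atTop c hγ)

lemma tendsto_G_mul_one_sub_G (hγ : 0 < γ) :
    Tendsto (fun u => G γ c u * (1 - G γ c u)) (atBot ⊔ atTop) (𝓝 0) := by
  simp_rw [G_eq_sigmoid]
  exact tendsto_sigmoid_mul_one_sub_sigmoid.comp
    ((tendsto_mul_sub_atBot c hγ).sup_sup (tendsto_mul_sub_atTop c hγ))

lemma tendsto_sub_mul_G_mul_one_sub_G (hγ : 0 < γ) :
    Tendsto (fun u => (u - c) * (G γ c u * (1 - G γ c u))) (atBot ⊔ atTop) (𝓝 0) := by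
  have h := (tendsto_mul_sigmoid_mul_one_sub_sigmoid.comp
    ((tendsto_mul_sub_atBot c hγ).sup_sup (tendsto_mul_sub_atTop c hγ))).const_mul γ⁻¹
  rw [mul_zero] at h
  refine h.congr fun u => ?_
  simp only [Function.comp_apply, G_eq_sigmoid]
  field_simp

end

/-- The four partial derivatives `1`, `G(u)`, `α₀₁·(u − c)·G(u)·(1 − G(u))` and
`−α₀₁·γ·G(u)·(1 − G(u))` of the intercept `α₀(u) = α₀ + α₀₁·G(u; γ, c)` with respect to
the parameters `(α₀, α₀₁, γ, c)` are linearly independent functions of `u`. -/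
theorem stmt10 (γ c α₀₁ : ℝ) (hγ : 0 < γ) (hα : α₀₁ ≠ 0) (l0 l1 l2 l3 : ℝ)
    (h : ∀ u : ℝ,
      l0 * 1 + l1 * G γ c u + l2 * (α₀₁ * (u - c) * G γ c u * (1 - G γ c u)) +
        l3 * (-(α₀₁ * γ) * G γ c u * (1 - G γ c u)) = 0) :
    l0 = 0 ∧ l1 = 0 ∧ l2 = 0 ∧ l3 = 0 := by
  have hlim (l : Filter ℝ) [l.NeBot] (hl : l ≤ atBot ⊔ atTop) (g : ℝ)
      (hG : Tendsto (G γ c) l (𝓝 g)) : l0 + l1 * g = 0 := by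
    have hsum := (((tendsto_const_nhds (x := l0)).add (hG.const_mul l1)).add
      (((tendsto_sub_mul_G_mul_one_sub_G c hγ).mono_left hl).const_mul (l2 * α₀₁))).add
      (((tendsto_G_mul_one_sub_G c hγ).mono_left hl).const_mul (l3 * -(α₀₁ * γ)))
    simp only [mul_zero, add_zero] at hsum
    exact tendsto_nhds_unique (hsum.congr fun u => by rw [← h u]; ring) tendsto_const_nhds
  have hl0 : l0 = 0 := by simpa using hlim atBot le_sup_left 0 (tendsto_G_atBot c hγ)
  have hl1 : l1 = 0 := by simpa [hl0] using hlim atTop le_sup_right 1 (tendsto_G_atTop c hγ)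
  have hline (u : ℝ) : l2 * (u - c) = l3 * γ := by
    have hu := h u
    rw [hl0, hl1] at hu
    have hfac : α₀₁ * (G γ c u * (1 - G γ c u)) * (l2 * (u - c) - l3 * γ) = 0 := by
      linear_combination hu
    linarith [(mul_eq_zero.mp hfac).resolve_left (mul_ne_zero hα (G_mul_one_sub_G_pos c u).ne')]
  have hl3 : l3 = 0 := by simpa [hγ.ne'] using (hline c).symm
  have hl2 : l2 = 0 := by simpa [hl3] using hline (c + 1)
  exact ⟨hl0, hl1, hl2, hl3⟩
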